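/- For discrete random variables with U_i = (M₃, S^{i-1}, S_{i+1}^n, Y₂^{i-1}): if the channel is memoryless with the Markov property (M, S^{i-1}, S_{i+1}^n, Y^{i-1}, Z^{i-1}) → (X_i, S_i) → (Y_i, Z_i) and the less noisy lemma gives I(Y₃^{i-1}; Y_{3,i} | M₃, Sⁿ) ≤ I(Y₂^{i-1}; Y_{3,i} | M₃, Sⁿ), then I(M₃; Y_{3,i} | Y₃^{i-1}, Sⁿ) ≤ I(M₃, S^{i-1}, S_{i+1}^n, Y₃^{i-1}; Y_{3,i} | S_i) ≤ I(U_i; Y_{3,i} | S_i). -/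

import Mathlib

open scoped Classical
open Finset

noncomputable section

/-- Probability that a discrete random variable `X` takes the value `x`,
under the pmf `p` on a finite sample space. -/
noncomputable def dpr {Ω 𝒳 : Type*} [Fintype Ω] (p : Ω → ℝ) (X : Ω → 𝒳) (x : 𝒳) : ℝ :=
  ∑ ω, if X ω = x then p ω else 0

/-- Shannon entropy (base 2) of a discrete random variable. -/
noncomputable def dH {Ω 𝒳 : Type*} [Fintype Ω] [Fintype 𝒳] (p : Ω → ℝ) (X : Ω → 𝒳) : ℝ :=
  - ∑ x, dpr p X x * Real.logb 2 (dpr p X x)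

/-- Mutual information I(X;Y). -/
noncomputable def dI {Ω 𝒳 𝒴 : Type*} [Fintype Ω] [Fintype 𝒳] [Fintype 𝒴]
    (p : Ω → ℝ) (X : Ω → 𝒳) (Y : Ω → 𝒴) : ℝ :=
  dH p X + dH p Y - dH p (fun ω => (X ω, Y ω))

/-- Conditional mutual information I(X;Y∣Z). -/
noncomputable def dCI {Ω 𝒳 𝒴 𝒵 : Type*} [Fintype Ω] [Fintype 𝒳] [Fintype 𝒴] [Fintype 𝒵]
    (p : Ω → ℝ) (X : Ω → 𝒳) (Y : Ω → 𝒴) (Z : Ω → 𝒵) : ℝ :=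
  dH p (fun ω => (X ω, Z ω)) + dH p (fun ω => (Y ω, Z ω)) - dH p Z
    - dH p (fun ω => (X ω, Y ω, Z ω))

/-- Conditional entropy H(X∣Y). -/
noncomputable def dCH {Ω 𝒳 𝒴 : Type*} [Fintype Ω] [Fintype 𝒳] [Fintype 𝒴]
    (p : Ω → ℝ) (X : Ω → 𝒳) (Y : Ω → 𝒴) : ℝ :=
  dH p (fun ω => (X ω, Y ω)) - dH p Y

/-- `p` is a probability mass function. -/
def IsPMF {Ω : Type*} [Fintype Ω] (p : Ω → ℝ) : Prop := (∀ ω, 0 ≤ p ω) ∧ ∑ ω, p ω = 1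

/-- The Markov chain X → Y → Z: X and Z are conditionally independent given Y. -/
def MarkovChain {Ω 𝒳 𝒴 𝒵 : Type*} [Fintype Ω] (p : Ω → ℝ)
    (X : Ω → 𝒳) (Y : Ω → 𝒴) (Z : Ω → 𝒵) : Prop :=
  ∀ x y z, dpr p (fun ω => (X ω, Y ω, Z ω)) (x, y, z) * dpr p Y y =
    dpr p (fun ω => (X ω, Y ω)) (x, y) * dpr p (fun ω => (Z ω, Y ω)) (z, y)

/-- Independence of two discrete random variables. -/
def dIndep {Ω 𝒳 𝒴 : Type*} [Fintype Ω] (p : Ω → ℝ) (X : Ω → 𝒳) (Y : Ω → 𝒴) : Prop :=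
  ∀ x y, dpr p (fun ω => (X ω, Y ω)) (x, y) = dpr p X x * dpr p Y y

end

/-! Both inequalities come from the chain rule `I(C, X; Y | Z) = I(C; Y | Z) + I(X; Y | C, Z)`
and the nonnegativity of conditional mutual information (Gibbs' inequality), once the
conditioning `Sⁿ` is identified with `(S^{i-1}, S_{i+1}^n, Sᵢ)`. Writing
`W = (S^{i-1}, S_{i+1}^n, Y₃^{i-1})`, the left-hand side is `I(M₃; Y₃ᵢ | W, Sᵢ)`, which is at most
`I(W, M₃; Y₃ᵢ | Sᵢ)`. In the second inequality both sides contain the common term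
`I(M₃, S^{i-1}, S_{i+1}^n; Y₃ᵢ | Sᵢ)`, and the remaining terms are the two sides of the less noisy
inequality. -/

lemma sub_le_mul_sub_log {q r : ℝ} (hq : 0 ≤ q) (hr : 0 ≤ r) (hqr : 0 < q → 0 < r) :
    q - r ≤ q * (Real.log q - Real.log r) := by
  rcases hq.eq_or_lt with rfl | hq
  · simpa using hr
  have hr := hqr hq
  have hlog := Real.log_le_sub_one_of_pos (div_pos hr hq)
  rw [Real.log_div hr.ne' hq.ne'] at hlog
  calc q - r = q * (1 - r / q) := by field_simp
    _ ≤ q * (Real.log q - Real.log r) := mul_le_mul_of_nonneg_left (by linarith) hq.le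

lemma sub_mul_div_le_mul_logb {q a b c : ℝ} (hq : 0 ≤ q) (hqa : q ≤ a) (hqb : q ≤ b)
    (hac : a ≤ c) :
    (q - a * b / c) / Real.log 2
      ≤ q * (Real.logb 2 q + Real.logb 2 c - Real.logb 2 a - Real.logb 2 b) := by
  rcases hq.eq_or_lt with rfl | hq
  · have hc : 0 ≤ c := hqa.trans hac
    have : 0 ≤ a * b / c := by positivity
    simp only [zero_sub, zero_mul]
    exact div_nonpos_of_nonpos_of_nonneg (by linarith) (Real.log_nonneg one_le_two)
  have ha := hq.trans_le hqa
  have hb := hq.trans_le hqb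
  have hc := ha.trans_le hac
  have hlogb : Real.logb 2 q + Real.logb 2 c - Real.logb 2 a - Real.logb 2 b
      = (Real.log q - Real.log (a * b / c)) / Real.log 2 := by
    rw [Real.log_div (by positivity) hc.ne', Real.log_mul ha.ne' hb.ne']
    simp only [Real.logb]
    ring
  rw [hlogb, mul_div_assoc']
  gcongr
  exact sub_le_mul_sub_log hq.le (by positivity) fun _ => by positivity

section Distribution

variable {Ω 𝒳 𝒴 𝒵 : Type*} [Fintype Ω] (p : Ω → ℝ)

lemma dpr_nonneg (hp : ∀ ω, 0 ≤ p ω) (X : Ω → 𝒳) (x : 𝒳) : 0 ≤ dpr p X x :=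
  Finset.sum_nonneg fun ω _ => by split_ifs <;> simp [hp ω]

lemma dpr_le_dpr_comp (hp : ∀ ω, 0 ≤ p ω) (f : 𝒳 → 𝒴) (X : Ω → 𝒳) (x : 𝒳) :
    dpr p X x ≤ dpr p (fun ω => f (X ω)) (f x) :=
  Finset.sum_le_sum fun ω _ => by split_ifs <;> simp_all

lemma dpr_comp_of_injective {f : 𝒳 → 𝒴} (hf : Function.Injective f) (X : Ω → 𝒳) (x : 𝒳) :
    dpr p (fun ω => f (X ω)) (f x) = dpr p X x := by
  simp [dpr, hf.eq_iff]

variable [Fintype 𝒳]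

lemma sum_dpr (X : Ω → 𝒳) : ∑ x, dpr p X x = ∑ ω, p ω := by
  unfold dpr
  rw [Finset.sum_comm]
  simp

lemma sum_dpr_prod_left (X : Ω → 𝒳) (Z : Ω → 𝒵) (z : 𝒵) :
    ∑ x, dpr p (fun ω => (X ω, Z ω)) (x, z) = dpr p Z z := by
  unfold dpr
  rw [Finset.sum_comm]
  simp [Prod.ext_iff, ite_and]

lemma dpr_comp_eq_sum (f : 𝒳 → 𝒴) (X : Ω → 𝒳) (y : 𝒴) :
    dpr p (fun ω => f (X ω)) y = ∑ x with f x = y, dpr p X x := by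
  unfold dpr
  rw [Finset.sum_comm]
  simp

variable [Fintype 𝒴] [Fintype 𝒵]

lemma dH_comp_eq_sum (f : 𝒳 → 𝒴) (X : Ω → 𝒳) :
    dH p (fun ω => f (X ω))
      = -∑ x, dpr p X x * Real.logb 2 (dpr p (fun ω => f (X ω)) (f x)) := by
  unfold dH
  rw [← Finset.sum_fiberwise Finset.univ f]
  congr 1
  refine Finset.sum_congr rfl fun y _ => ?_
  have hfiber : ∀ x ∈ ({x | f x = y} : Finset 𝒳),
      dpr p X x * Real.logb 2 (dpr p (fun ω => f (X ω)) (f x))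
        = dpr p X x * Real.logb 2 (dpr p (fun ω => f (X ω)) y) := by
    intro x hx
    rw [(Finset.mem_filter.1 hx).2]
  rw [Finset.sum_congr rfl hfiber, ← Finset.sum_mul, ← dpr_comp_eq_sum]

lemma dH_comp_of_injective {f : 𝒳 → 𝒴} (hf : Function.Injective f) (X : Ω → 𝒳) :
    dH p (fun ω => f (X ω)) = dH p X := by
  rw [dH_comp_eq_sum]
  simp only [dpr_comp_of_injective p hf]
  rfl

lemma dCI_comp_of_injective {𝒳' 𝒵' : Type*} [Fintype 𝒳'] [Fintype 𝒵'] {f : 𝒳 → 𝒳'}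
    {g : 𝒵 → 𝒵'} (hf : Function.Injective f) (hg : Function.Injective g) (X : Ω → 𝒳)
    (Y : Ω → 𝒴) (Z : Ω → 𝒵) :
    dCI p (fun ω => f (X ω)) Y (fun ω => g (Z ω)) = dCI p X Y Z := by
  have hXZ : dH p (fun ω => (f (X ω), g (Z ω))) = dH p (fun ω => (X ω, Z ω)) :=
    dH_comp_of_injective p (hf.prodMap hg) fun ω => (X ω, Z ω)
  have hYZ : dH p (fun ω => (Y ω, g (Z ω))) = dH p (fun ω => (Y ω, Z ω)) :=
    dH_comp_of_injective p (Function.injective_id.prodMap hg) fun ω => (Y ω, Z ω)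
  have hXYZ : dH p (fun ω => (f (X ω), Y ω, g (Z ω))) = dH p (fun ω => (X ω, Y ω, Z ω)) :=
    dH_comp_of_injective p (hf.prodMap (Function.injective_id.prodMap hg))
      fun ω => (X ω, Y ω, Z ω)
  simp only [dCI, hXZ, hYZ, hXYZ, dH_comp_of_injective p hg]

lemma dCI_prod_assoc {𝒜 ℬ 𝒞 : Type*} [Fintype 𝒜] [Fintype ℬ] [Fintype 𝒞] (A : Ω → 𝒜)
    (B : Ω → ℬ) (C : Ω → 𝒞) (X : Ω → 𝒳) (Y : Ω → 𝒴) (Z : Ω → 𝒵) :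
    dCI p (fun ω => (A ω, B ω, C ω, X ω)) Y Z = dCI p (fun ω => ((A ω, B ω, C ω), X ω)) Y Z := by
  have hf : Function.Injective fun t : (𝒜 × ℬ × 𝒞) × 𝒳 => (t.1.1, t.1.2.1, t.1.2.2, t.2) :=
    fun _ _ h => by simp_all [Prod.ext_iff]
  exact dCI_comp_of_injective p hf Function.injective_id (fun ω => ((A ω, B ω, C ω), X ω)) Y Z

lemma dCI_prod_left_eq_add {𝒞 : Type*} [Fintype 𝒞] (C : Ω → 𝒞) (X : Ω → 𝒳) (Y : Ω → 𝒴)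
    (Z : Ω → 𝒵) :
    dCI p (fun ω => (C ω, X ω)) Y Z = dCI p C Y Z + dCI p X Y (fun ω => (C ω, Z ω)) := by
  unfold dCI
  rw [← dH_comp_of_injective p (f := fun t : 𝒳 × 𝒞 × 𝒵 => ((t.2.1, t.1), t.2.2))
      (fun _ _ h => by simp_all [Prod.ext_iff]) (fun ω => (X ω, C ω, Z ω)),
    ← dH_comp_of_injective p (f := fun t : 𝒳 × 𝒴 × 𝒞 × 𝒵 => ((t.2.2.1, t.1), t.2.1, t.2.2.2))
      (fun _ _ h => by simp_all [Prod.ext_iff]) (fun ω => (X ω, Y ω, C ω, Z ω)),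
    ← dH_comp_of_injective p (f := fun t : 𝒴 × 𝒞 × 𝒵 => (t.2.1, t.1, t.2.2))
      (fun _ _ h => by simp_all [Prod.ext_iff]) (fun ω => (Y ω, C ω, Z ω))]
  ring

lemma dCI_eq_sum (X : Ω → 𝒳) (Y : Ω → 𝒴) (Z : Ω → 𝒵) :
    dCI p X Y Z = ∑ w : 𝒳 × 𝒴 × 𝒵, dpr p (fun ω => (X ω, Y ω, Z ω)) w *
      (Real.logb 2 (dpr p (fun ω => (X ω, Y ω, Z ω)) w) + Real.logb 2 (dpr p Z w.2.2)
        - Real.logb 2 (dpr p (fun ω => (X ω, Z ω)) (w.1, w.2.2))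
        - Real.logb 2 (dpr p (fun ω => (Y ω, Z ω)) w.2)) := by
  have hXZ : dH p (fun ω => (X ω, Z ω)) = -∑ w : 𝒳 × 𝒴 × 𝒵, dpr p (fun ω => (X ω, Y ω, Z ω)) w
      * Real.logb 2 (dpr p (fun ω => (X ω, Z ω)) (w.1, w.2.2)) :=
    dH_comp_eq_sum p (fun w => (w.1, w.2.2)) fun ω => (X ω, Y ω, Z ω)
  have hYZ : dH p (fun ω => (Y ω, Z ω)) = -∑ w : 𝒳 × 𝒴 × 𝒵, dpr p (fun ω => (X ω, Y ω, Z ω)) w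
      * Real.logb 2 (dpr p (fun ω => (Y ω, Z ω)) w.2) :=
    dH_comp_eq_sum p Prod.snd fun ω => (X ω, Y ω, Z ω)
  have hZ : dH p Z = -∑ w : 𝒳 × 𝒴 × 𝒵, dpr p (fun ω => (X ω, Y ω, Z ω)) w
      * Real.logb 2 (dpr p Z w.2.2) :=
    dH_comp_eq_sum p (fun w => w.2.2) fun ω => (X ω, Y ω, Z ω)
  rw [dCI, hXZ, hYZ, hZ]
  simp only [dH, mul_add, mul_sub, Finset.sum_add_distrib, Finset.sum_sub_distrib]
  ring

lemma sum_dpr_mul_dpr_div_dpr (X : Ω → 𝒳) (Y : Ω → 𝒴) (Z : Ω → 𝒵) :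
    ∑ w : 𝒳 × 𝒴 × 𝒵, dpr p (fun ω => (X ω, Z ω)) (w.1, w.2.2)
      * dpr p (fun ω => (Y ω, Z ω)) w.2 / dpr p Z w.2.2 = ∑ ω, p ω := by
  rw [← sum_dpr p Z, Fintype.sum_prod_type_right, Fintype.sum_prod_type_right]
  refine Finset.sum_congr rfl fun z _ => ?_
  simp_rw [← Finset.sum_div, ← Finset.sum_mul, sum_dpr_prod_left, ← Finset.mul_sum,
    sum_dpr_prod_left, mul_self_div_self]

theorem dCI_nonneg (hp : ∀ ω, 0 ≤ p ω) (X : Ω → 𝒳) (Y : Ω → 𝒴) (Z : Ω → 𝒵) :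
    0 ≤ dCI p X Y Z := by
  -- Gibbs: each term of `dCI_eq_sum` is at least `(q - a b / c) / log 2`, and these sum to `0`.
  have hsum : ∑ w : 𝒳 × 𝒴 × 𝒵, (dpr p (fun ω => (X ω, Y ω, Z ω)) w
      - dpr p (fun ω => (X ω, Z ω)) (w.1, w.2.2) * dpr p (fun ω => (Y ω, Z ω)) w.2
        / dpr p Z w.2.2) = 0 := by
    rw [Finset.sum_sub_distrib, sum_dpr, sum_dpr_mul_dpr_div_dpr, sub_self]
  rw [dCI_eq_sum, ← zero_div (Real.log 2), ← hsum, Finset.sum_div]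
  refine Finset.sum_le_sum fun w _ => sub_mul_div_le_mul_logb (dpr_nonneg p hp _ _)
    (dpr_le_dpr_comp p hp (fun w => (w.1, w.2.2)) _ w) (dpr_le_dpr_comp p hp Prod.snd _ w) ?_
  exact dpr_le_dpr_comp p hp Prod.snd (fun ω => (X ω, Z ω)) (w.1, w.2.2)

lemma dCI_le_dCI_prod {𝒞 : Type*} [Fintype 𝒞] (hp : ∀ ω, 0 ≤ p ω) (X : Ω → 𝒳) (Y : Ω → 𝒴)
    (C : Ω → 𝒞) (Z : Ω → 𝒵) :
    dCI p X Y (fun ω => (C ω, Z ω)) ≤ dCI p (fun ω => (X ω, C ω)) Y Z := by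
  rw [← dCI_comp_of_injective p (f := Prod.swap) Prod.swap_injective Function.injective_id,
    dCI_prod_left_eq_add]
  exact le_add_of_nonneg_left (dCI_nonneg p hp C Y Z)

lemma dCI_prod_le_dCI_prod_of_le {𝒳' 𝒞 : Type*} [Fintype 𝒳'] [Fintype 𝒞] {C : Ω → 𝒞}
    {X : Ω → 𝒳} {X' : Ω → 𝒳'} {Y : Ω → 𝒴} {Z : Ω → 𝒵}
    (hle : dCI p X Y (fun ω => (C ω, Z ω)) ≤ dCI p X' Y (fun ω => (C ω, Z ω))) :
    dCI p (fun ω => (C ω, X ω)) Y Z ≤ dCI p (fun ω => (C ω, X' ω)) Y Z := by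
  rw [dCI_prod_left_eq_add, dCI_prod_left_eq_add]
  exact add_le_add_right hle _

end Distribution
lemma injective_prefix_suffix_eval {α : Type*} {n : ℕ} (i : Fin n) :
    Function.Injective fun s : Fin n → α =>
      ((s ∘ Fin.castLE i.isLt.le, (s ∘ (↑) : {j : Fin n // i < j} → α)), s i) := by
  intro s s' h
  simp only [Prod.mk.injEq] at h
  obtain ⟨⟨hpre, hsuf⟩, hi⟩ := h
  funext j
  rcases lt_trichotomy j i with hj | rfl | hj
  · simpa using congrFun hpre ⟨j, hj⟩
  · exact hi
  · exact congrFun hsuf ⟨j, hj⟩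

section SplitState

variable {Ω ℳ 𝒮 𝒴 𝒯 𝒯' : Type*} [Fintype Ω] [Fintype ℳ] [Fintype 𝒮] [Fintype 𝒴] [Fintype 𝒯]
  [Fintype 𝒯'] (p : Ω → ℝ) {n : ℕ} (i : Fin n)

lemma dCI_le_dCI_split_state (hp : ∀ ω, 0 ≤ p ω) (M : Ω → ℳ) (Y : Ω → 𝒴) (T : Ω → 𝒯)
    (Sn : Ω → Fin n → 𝒮) :
    dCI p M Y (fun ω => (T ω, Sn ω))
      ≤ dCI p (fun ω => (M ω, Sn ω ∘ Fin.castLE i.isLt.le,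
          (Sn ω ∘ (↑) : {j : Fin n // i < j} → 𝒮), T ω)) Y (fun ω => Sn ω i) := by
  have hsplit : Function.Injective fun t : 𝒯 × (Fin n → 𝒮) =>
      ((t.2 ∘ Fin.castLE i.isLt.le, (t.2 ∘ (↑) : {j : Fin n // i < j} → 𝒮), t.1), t.2 i) := by
    rintro ⟨t, s⟩ ⟨t', s'⟩ h
    simp only [Prod.mk.injEq] at h
    exact Prod.ext h.1.2.2 (injective_prefix_suffix_eval i (by simp [h]))
  calc dCI p M Y (fun ω => (T ω, Sn ω))
      = dCI p M Y (fun ω => ((Sn ω ∘ Fin.castLE i.isLt.le,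
          (Sn ω ∘ (↑) : {j : Fin n // i < j} → 𝒮), T ω), Sn ω i)) :=
        (dCI_comp_of_injective p Function.injective_id hsplit M Y _).symm
    _ ≤ _ := dCI_le_dCI_prod p hp _ _ _ _

lemma dCI_split_state_le_of_le {M : Ω → ℳ} {Y : Ω → 𝒴} {T : Ω → 𝒯} {T' : Ω → 𝒯'}
    {Sn : Ω → Fin n → 𝒮}
    (hle : dCI p T Y (fun ω => (M ω, Sn ω)) ≤ dCI p T' Y (fun ω => (M ω, Sn ω))) :
    dCI p (fun ω => (M ω, Sn ω ∘ Fin.castLE i.isLt.le,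
        (Sn ω ∘ (↑) : {j : Fin n // i < j} → 𝒮), T ω)) Y (fun ω => Sn ω i)
      ≤ dCI p (fun ω => (M ω, Sn ω ∘ Fin.castLE i.isLt.le,
        (Sn ω ∘ (↑) : {j : Fin n // i < j} → 𝒮), T' ω)) Y (fun ω => Sn ω i) := by
  have hsplit : Function.Injective fun t : ℳ × (Fin n → 𝒮) =>
      ((t.1, t.2 ∘ Fin.castLE i.isLt.le, (t.2 ∘ (↑) : {j : Fin n // i < j} → 𝒮)), t.2 i) := by
    rintro ⟨m, s⟩ ⟨m', s'⟩ h
    simp only [Prod.mk.injEq] at h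
    exact Prod.ext h.1.1 (injective_prefix_suffix_eval i (by simp [h]))
  have hle' : dCI p T Y (fun ω => ((M ω, Sn ω ∘ Fin.castLE i.isLt.le,
        (Sn ω ∘ (↑) : {j : Fin n // i < j} → 𝒮)), Sn ω i))
      ≤ dCI p T' Y (fun ω => ((M ω, Sn ω ∘ Fin.castLE i.isLt.le,
        (Sn ω ∘ (↑) : {j : Fin n // i < j} → 𝒮)), Sn ω i)) :=
    (dCI_comp_of_injective p Function.injective_id hsplit T Y fun ω => (M ω, Sn ω)).trans_le
      (hle.trans_eq
        (dCI_comp_of_injective p Function.injective_id hsplit T' Y fun ω => (M ω, Sn ω)).symm)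
  rw [dCI_prod_assoc, dCI_prod_assoc]
  exact dCI_prod_le_dCI_prod_of_le p hle'

end SplitState

theorem single_letterization_R3_general {Ω ℳ 𝒮 𝒴₂ 𝒴₃ : Type*}
    [Fintype Ω] [Fintype ℳ] [Fintype 𝒮] [Fintype 𝒴₂] [Fintype 𝒴₃]
    (n : ℕ) (p : Ω → ℝ) (hp : IsPMF p)
    (M₃ : Ω → ℳ) (S : Fin n → Ω → 𝒮)
    (Y₂ : Fin n → Ω → 𝒴₂) (Y₃ : Fin n → Ω → 𝒴₃) (i : Fin n)
    -- the less noisy lemma: I(Y₃^{i-1}; Y₃ᵢ | M₃, Sⁿ) ≤ I(Y₂^{i-1}; Y₃ᵢ | M₃, Sⁿ)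
    (hLN : dCI p (fun ω => fun j : Fin i.val => Y₃ ⟨j.val, j.isLt.trans i.isLt⟩ ω) (Y₃ i)
        (fun ω => (M₃ ω, fun j => S j ω))
      ≤ dCI p (fun ω => fun j : Fin i.val => Y₂ ⟨j.val, j.isLt.trans i.isLt⟩ ω) (Y₃ i)
        (fun ω => (M₃ ω, fun j => S j ω))) :
    dCI p M₃ (Y₃ i)
        (fun ω => ((fun j : Fin i.val => Y₃ ⟨j.val, j.isLt.trans i.isLt⟩ ω),
          (fun j => S j ω)))
      ≤ dCI p
        (fun ω => (M₃ ω,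
          (fun j : Fin i.val => S ⟨j.val, j.isLt.trans i.isLt⟩ ω),
          (fun j : {j : Fin n // i < j} => S j.val ω),
          (fun j : Fin i.val => Y₃ ⟨j.val, j.isLt.trans i.isLt⟩ ω)))
        (Y₃ i) (S i)
    ∧
    dCI p
        (fun ω => (M₃ ω,
          (fun j : Fin i.val => S ⟨j.val, j.isLt.trans i.isLt⟩ ω),
          (fun j : {j : Fin n // i < j} => S j.val ω),
          (fun j : Fin i.val => Y₃ ⟨j.val, j.isLt.trans i.isLt⟩ ω)))
        (Y₃ i) (S i)
      ≤ dCI p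
        (fun ω => (M₃ ω,
          (fun j : Fin i.val => S ⟨j.val, j.isLt.trans i.isLt⟩ ω),
          (fun j : {j : Fin n // i < j} => S j.val ω),
          (fun j : Fin i.val => Y₂ ⟨j.val, j.isLt.trans i.isLt⟩ ω)))
        (Y₃ i) (S i) :=
  ⟨dCI_le_dCI_split_state p i hp.1 M₃ (Y₃ i) _ fun ω j => S j ω,
    dCI_split_state_le_of_le p i (Sn := fun ω j => S j ω) hLN⟩

/-- single-letterization of the R₃ bound in the converse of Theorem 4:
I(M₃; Y₃ᵢ | Y₃^{i-1}, Sⁿ) ≤ I(M₃, S^{i-1}, S_{i+1}^n, Y₃^{i-1}; Y₃ᵢ | Sᵢ)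
  ≤ I(Uᵢ; Y₃ᵢ | Sᵢ), with Uᵢ = (M₃, S^{i-1}, S_{i+1}^n, Y₂^{i-1}). -/
theorem single_letterization_R3 {Ω ℳ 𝒳 𝒮 𝒴₂ 𝒴₃ : Type*}
    [Fintype Ω] [Fintype ℳ] [Fintype 𝒳] [Fintype 𝒮] [Fintype 𝒴₂] [Fintype 𝒴₃]
    (n : ℕ) (p : Ω → ℝ) (hp : IsPMF p)
    (M₃ : Ω → ℳ) (X : Fin n → Ω → 𝒳) (S : Fin n → Ω → 𝒮)
    (Y₂ : Fin n → Ω → 𝒴₂) (Y₃ : Fin n → Ω → 𝒴₃) (i : Fin n)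
    -- memorylessness: (M₃, S^{i-1}, S_{i+1}^n, Y₂^{i-1}, Y₃^{i-1}) → (Xᵢ,Sᵢ) → (Y₂ᵢ,Y₃ᵢ)
    (hMem : MarkovChain p
      (fun ω => (M₃ ω,
          (fun j : Fin i.val => S ⟨j.val, j.isLt.trans i.isLt⟩ ω),
          (fun j : {j : Fin n // i < j} => S j.val ω),
          (fun j : Fin i.val => Y₂ ⟨j.val, j.isLt.trans i.isLt⟩ ω),
          (fun j : Fin i.val => Y₃ ⟨j.val, j.isLt.trans i.isLt⟩ ω)))
      (fun ω => (X i ω, S i ω))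
      (fun ω => (Y₂ i ω, Y₃ i ω)))
    -- the less noisy lemma: I(Y₃^{i-1}; Y₃ᵢ | M₃, Sⁿ) ≤ I(Y₂^{i-1}; Y₃ᵢ | M₃, Sⁿ)
    (hLN : dCI p (fun ω => fun j : Fin i.val => Y₃ ⟨j.val, j.isLt.trans i.isLt⟩ ω) (Y₃ i)
        (fun ω => (M₃ ω, fun j => S j ω))
      ≤ dCI p (fun ω => fun j : Fin i.val => Y₂ ⟨j.val, j.isLt.trans i.isLt⟩ ω) (Y₃ i)
        (fun ω => (M₃ ω, fun j => S j ω))) :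
    dCI p M₃ (Y₃ i)
        (fun ω => ((fun j : Fin i.val => Y₃ ⟨j.val, j.isLt.trans i.isLt⟩ ω),
          (fun j => S j ω)))
      ≤ dCI p
        (fun ω => (M₃ ω,
          (fun j : Fin i.val => S ⟨j.val, j.isLt.trans i.isLt⟩ ω),
          (fun j : {j : Fin n // i < j} => S j.val ω),
          (fun j : Fin i.val => Y₃ ⟨j.val, j.isLt.trans i.isLt⟩ ω)))
        (Y₃ i) (S i)
    ∧
    dCI p
        (fun ω => (M₃ ω,
          (fun j : Fin i.val => S ⟨j.val, j.isLt.trans i.isLt⟩ ω),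
          (fun j : {j : Fin n // i < j} => S j.val ω),
          (fun j : Fin i.val => Y₃ ⟨j.val, j.isLt.trans i.isLt⟩ ω)))
        (Y₃ i) (S i)
      ≤ dCI p
        (fun ω => (M₃ ω,
          (fun j : Fin i.val => S ⟨j.val, j.isLt.trans i.isLt⟩ ω),
          (fun j : {j : Fin n // i < j} => S j.val ω),
          (fun j : Fin i.val => Y₂ ⟨j.val, j.isLt.trans i.isLt⟩ ω)))
        (Y₃ i) (S i) :=
  single_letterization_R3_general n p hp M₃ S Y₂ Y₃ i hLN
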